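/- For the forward–backward algorithm with deviations, for every x* ∈ zer(A + C) the real sequence (‖x_n − x*‖_M)_{n≥0} converges. -/

import Mathlib

open Filter
open scoped RealInnerProductSpace Pointwise Topology

/-- The `M`-induced norm `‖w‖_M = √⟪w, M w⟫`. -/
noncomputable def mnorm {H : Type*} [NormedAddCommGroup H] [InnerProductSpace ℝ H]
    (M : H →L[ℝ] H) (w : H) : ℝ :=
  Real.sqrt ⟪w, M w⟫

/-!
Along the iteration, `V_n := ‖x_n - x*‖²_M + e_n`, with `e_n` the weighted `M`-norms of the
deviations `u_n, v_n`, satisfies `V_{n+1} ≤ V_n - ℓ_n² + e_{n+1} ≤ V_n - ε ℓ_n²`: the first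
inequality is monotonicity of `A` plus cocoercivity of `C` (through a Young inequality), rewritten
by an exact quadratic identity; the second is the deviation condition with `ζ_n ≤ 1 - ε`.
Hence `V_n` converges, `ℓ_n² → 0`, so `e_n → 0`, and `‖x_n - x*‖²_M` converges.
-/

theorem exists_tendsto_of_descent_with_deviation {a e ℓ : ℕ → ℝ} {ε : ℝ} (hε : 0 < ε) (ha : ∀ n, 0 ≤ a n)
    (he : ∀ n, 0 ≤ e n) (hℓ : ∀ n, 0 ≤ ℓ n) (hstep : ∀ n, a (n + 1) + ℓ n ≤ a n + e n)
    (hdev : ∀ n, e (n + 1) ≤ (1 - ε) * ℓ n) :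
    ∃ r, Tendsto a atTop (𝓝 r) := by
  have hdesc : ∀ n, a (n + 1) + e (n + 1) + ε * ℓ n ≤ a n + e n := fun n => by
    linarith [hstep n, hdev n]
  have hanti : Antitone fun n => a n + e n := antitone_nat_of_succ_le fun n => by
    linarith [hdesc n, mul_nonneg hε.le (hℓ n)]
  obtain ⟨L, hV⟩ : ∃ L, Tendsto (fun n => a n + e n) atTop (𝓝 L) :=
    ⟨_, tendsto_atTop_ciInf hanti ⟨0, by rintro _ ⟨n, rfl⟩; exact add_nonneg (ha n) (he n)⟩⟩
  have hℓ0 : Tendsto ℓ atTop (𝓝 0) := by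
    have hgap : Tendsto (fun n => (a n + e n - (a (n + 1) + e (n + 1))) / ε) atTop (𝓝 0) := by
      simpa using (hV.sub (hV.comp (tendsto_add_atTop_nat 1))).div_const ε
    refine squeeze_zero hℓ (fun n => ?_) hgap
    rw [le_div_iff₀ hε]
    linarith [hdesc n]
  have he0 : Tendsto e atTop (𝓝 0) := by
    refine (tendsto_add_atTop_iff_nat 1).1 (squeeze_zero (fun n => he _) hdev ?_)
    simpa using hℓ0.const_mul (1 - ε)
  exact ⟨L, by simpa using hV.sub he0⟩

section Quadratic

variable {H : Type*} [NormedAddCommGroup H] [InnerProductSpace ℝ H] {M : H →L[ℝ] H}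

theorem mnorm_sq (hpos : ∀ w : H, 0 ≤ ⟪w, M w⟫) (w : H) : mnorm M w ^ 2 = ⟪w, M w⟫ :=
  Real.sq_sqrt (hpos w)

theorem neg_inner_le_young (hMsa : ∀ a b : H, ⟪M a, b⟫ = ⟪a, M b⟫)
    (hpos : ∀ w : H, 0 ≤ ⟪w, M w⟫) {β : ℝ} (hβ : 0 < β) (m d : H) :
    -⟪m, M d⟫ ≤ (1 / β) * ⟪m, M m⟫ + (β / 4) * ⟪d, M d⟫ := by
  have hcross : ⟪d, M m⟫ = ⟪m, M d⟫ := by rw [← hMsa, real_inner_comm]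
  calc -⟪m, M d⟫
      = (1 / β) * ⟪m, M m⟫ + (β / 4) * ⟪d, M d⟫
          - (1 / β) * ⟪m + (β / 2) • d, M (m + (β / 2) • d)⟫ := by
        simp only [map_add, map_smul, inner_add_left, inner_add_right, real_inner_smul_left,
          real_inner_smul_right, hcross]
        field_simp
        ring
    _ ≤ (1 / β) * ⟪m, M m⟫ + (β / 4) * ⟪d, M d⟫ :=
        sub_le_self _ (mul_nonneg (by positivity) (hpos _))

/-- With `s = x_n - x*`, `q = p_n - x_n`: the left side is the Lyapunov decrease of one step, the
right side `2l (⟪z_n - p_n, p_n - x*⟫_M + (γβ/4) ‖p_n - y_n‖²_M)`. -/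
theorem lyapunov_identity (hsym : ∀ a b : H, ⟪a, M b⟫ = ⟪b, M a⟫) {l g β : ℝ}
    (hD₁ : 2 - l * g * β ≠ 0) (hD₂ : 4 - 2 * l - g * β ≠ 0) (s u v q : H) :
    ⟪s, M s⟫ + (l * g * β / (2 - l * g * β)) * ⟪u, M u⟫
        + (l * (2 - l * g * β) / (4 - 2 * l - g * β)) * ⟪v, M v⟫
      - ⟪s + l • (q - ((1 - l) * g * β / (2 - l * g * β)) • u - v),
          M (s + l • (q - ((1 - l) * g * β / (2 - l * g * β)) • u - v))⟫
      - (l * (4 - 2 * l - g * β) / 2) *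
          ⟪q + (l * g * β / (2 - l * g * β)) • u - (2 * (1 - l) / (4 - 2 * l - g * β)) • v,
            M (q + (l * g * β / (2 - l * g * β)) • u - (2 * (1 - l) / (4 - 2 * l - g * β)) • v)⟫
    = 2 * l * (⟪((1 - l) * g * β / (2 - l * g * β)) • u + v - q, M (s + q)⟫
        + (g * β / 4) * ⟪q - u, M (q - u)⟫) := by
  simp only [map_add, map_sub, map_smul, inner_add_left, inner_add_right, inner_sub_left,
    inner_sub_right, real_inner_smul_left, real_inner_smul_right]
  simp only [hsym u s, hsym v s, hsym q s, hsym v u, hsym q u, hsym q v]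
  -- the form `field_simp` normalizes the denominator `4 - 2 * l - g * β` to
  have hD₂' : 4 - l * 2 - g * β ≠ 0 := by rwa [mul_comm l]
  field_simp
  ring

theorem inner_forward_backward_nonneg (hMsa : ∀ a b : H, ⟪M a, b⟫ = ⟪a, M b⟫)
    (hpos : ∀ w : H, 0 ≤ ⟪w, M w⟫) {Minv : H →L[ℝ] H} (hMinv : ∀ a : H, M (Minv a) = a)
    {β : ℝ} (hβ : 0 < β) {A : H → Set H}
    (hAmono : ∀ a b ua vb : H, ua ∈ A a → vb ∈ A b → ⟪ua - vb, a - b⟫ ≥ 0) {C : H → H}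
    (hC : ∀ a b : H, ⟪C a - C b, a - b⟫ ≥ (1 / β) * mnorm Minv (C a - C b) ^ 2)
    {xs : H} (hxs : -C xs ∈ A xs) {g : ℝ} (hg : 0 ≤ g) {y z p : H}
    (hp : M z - M p - g • C y ∈ g • A p) :
    0 ≤ ⟪z - p, M (p - xs)⟫ + (g * β / 4) * ⟪p - y, M (p - y)⟫ := by
  obtain ⟨w, hwA, hw⟩ := Set.mem_smul_set.1 hp
  have hmono : 0 ≤ ⟪w + C xs, p - xs⟫ := by
    simpa only [sub_neg_eq_add] using hAmono p xs w (-C xs) hwA hxs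
  have hres : ⟪z - p, M (p - xs)⟫ = g * ⟪w + C xs, p - xs⟫ + g * ⟪C y - C xs, p - xs⟫ := by
    rw [← hMsa, map_sub, ← sub_add_cancel (M z - M p) (g • C y), ← hw]
    simp only [inner_add_left, inner_sub_left, real_inner_smul_left]
    ring
  set m := Minv (C y - C xs)
  have hMm : M m = C y - C xs := hMinv _
  have hcoco : (1 / β) * ⟪m, M m⟫ ≤ ⟪C y - C xs, y - xs⟫ := by
    have hQ : ⟪C y - C xs, m⟫ = ⟪m, M m⟫ := by rw [hMm, real_inner_comm]
    have h := hC y xs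
    rwa [mnorm, hQ, Real.sq_sqrt (hpos m)] at h
  have hyoung : -⟪C y - C xs, p - y⟫ ≤ (1 / β) * ⟪m, M m⟫ + (β / 4) * ⟪p - y, M (p - y)⟫ := by
    simpa only [← hMsa, hMm] using neg_inner_le_young hMsa hpos hβ m (p - y)
  have hsplit : ⟪C y - C xs, p - xs⟫ = ⟪C y - C xs, p - y⟫ + ⟪C y - C xs, y - xs⟫ := by
    rw [← inner_add_right, sub_add_sub_cancel]
  have hlow : -(β / 4) * ⟪p - y, M (p - y)⟫ ≤ ⟪C y - C xs, p - xs⟫ := by linarith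
  linarith [mul_nonneg hg hmono, mul_le_mul_of_nonneg_left hlow hg]

theorem mnorm_sq_forward_backward_step_le (hMsa : ∀ a b : H, ⟪M a, b⟫ = ⟪a, M b⟫)
    (hpos : ∀ w : H, 0 ≤ ⟪w, M w⟫) {Minv : H →L[ℝ] H} (hMinv : ∀ a : H, M (Minv a) = a)
    {β : ℝ} (hβ : 0 < β) {A : H → Set H}
    (hAmono : ∀ a b ua vb : H, ua ∈ A a → vb ∈ A b → ⟪ua - vb, a - b⟫ ≥ 0) {C : H → H}
    (hC : ∀ a b : H, ⟪C a - C b, a - b⟫ ≥ (1 / β) * mnorm Minv (C a - C b) ^ 2)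
    {xs : H} (hxs : -C xs ∈ A xs) {l g : ℝ} (hl : 0 ≤ l) (hg : 0 ≤ g)
    (hD₁ : 2 - l * g * β ≠ 0) (hD₂ : 4 - 2 * l - g * β ≠ 0) {x u v p y z x' : H}
    (hy : y = x + u) (hz : z = x + ((1 - l) * g * β / (2 - l * g * β)) • u + v)
    (hp : M z - M p - g • C y ∈ g • A p) (hx' : x' = x + l • (p - z)) :
    mnorm M (x' - xs) ^ 2 + (l * (4 - 2 * l - g * β) / 2) *
        mnorm M (p - x + (l * g * β / (2 - l * g * β)) • u
          - (2 * (1 - l) / (4 - 2 * l - g * β)) • v) ^ 2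
      ≤ mnorm M (x - xs) ^ 2 + (l * g * β / (2 - l * g * β)) * mnorm M u ^ 2
        + (l * (2 - l * g * β) / (4 - 2 * l - g * β)) * mnorm M v ^ 2 := by
  have hsym : ∀ a b : H, ⟪a, M b⟫ = ⟪b, M a⟫ := fun a b => by rw [← hMsa, real_inner_comm]
  have hres := inner_forward_backward_nonneg hMsa hpos hMinv hβ hAmono hC hxs hg hp
  have hid := lyapunov_identity hsym hD₁ hD₂ (x - xs) u v (p - x)
  subst hy hz hx'
  have hx'_eq : x + l • (p - (x + ((1 - l) * g * β / (2 - l * g * β)) • u + v)) - xs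
      = x - xs + l • (p - x - ((1 - l) * g * β / (2 - l * g * β)) • u - v) := by module
  have hzp : x + ((1 - l) * g * β / (2 - l * g * β)) • u + v - p
      = ((1 - l) * g * β / (2 - l * g * β)) • u + v - (p - x) := by abel
  have hps : p - xs = x - xs + (p - x) := by abel
  have hpy : p - (x + u) = p - x - u := by abel
  rw [hzp, hps, hpy] at hres
  simp only [mnorm_sq hpos, hx'_eq]
  linarith [mul_nonneg (mul_nonneg zero_le_two hl) hres]

end Quadratic

theorem step_denominators_pos {l g β : ℝ} (hg : 0 < g) (hβ : 0 < β)
    (hl : l < 2 - g * β / 2) : 0 < 4 - 2 * l - g * β ∧ 0 < 2 - l * g * β :=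
  ⟨by linarith, by nlinarith [mul_pos (sub_pos.2 hl) (mul_pos hg hβ), sq_nonneg (g * β - 2)]⟩

theorem distance_sequence_converges_general
    {H : Type*} [NormedAddCommGroup H] [InnerProductSpace ℝ H]
    (M : H →L[ℝ] H)
    (hMsa : ∀ a b : H, ⟪M a, b⟫ = ⟪a, M b⟫)
    (hMpos : ∃ c > (0:ℝ), ∀ a : H, ⟪a, M a⟫ ≥ c * ‖a‖ ^ 2)
    (Minv : H →L[ℝ] H)
    (hMinv₂ : ∀ a : H, M (Minv a) = a)
    (β : ℝ) (hβ : 0 < β)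
    (A : H → Set H)
    (hAmono : ∀ a b ua vb : H, ua ∈ A a → vb ∈ A b → ⟪ua - vb, a - b⟫ ≥ 0)
    (C : H → H)
    (hC : ∀ a b : H, ⟪C a - C b, a - b⟫ ≥ (1 / β) * mnorm Minv (C a - C b) ^ 2)
    (ε : ℝ) (hε0 : 0 < ε)
    (ζ γ lam : ℕ → ℝ)
    (hζ : ∀ n, 0 ≤ ζ n ∧ ζ n ≤ 1 - ε)
    (hγ : ∀ n, ε ≤ γ n ∧ γ n ≤ (4 - 3 * ε) / β)
    (hlam : ∀ n, ε ≤ lam n ∧ lam n ≤ 2 - γ n * β / 2 - ε / 2)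
    (x u v p y z : ℕ → H) (ℓsq : ℕ → ℝ)
    (hy : ∀ n, y n = x n + u n)
    (hz : ∀ n, z n = x n + (((1 - lam n) * γ n * β) / (2 - lam n * γ n * β)) • u n + v n)
    (hp : ∀ n, M (z n) - M (p n) - γ n • C (y n) ∈ γ n • A (p n))
    (hx : ∀ n, x (n + 1) = x n + lam n • (p n - z n))
    (hℓ : ∀ n, ℓsq n = (lam n * (4 - 2 * lam n - γ n * β) / 2) *
      mnorm M (p n - x n + ((lam n * γ n * β) / (2 - lam n * γ n * β)) • u n
        - ((2 * (1 - lam n)) / (4 - 2 * lam n - γ n * β)) • v n) ^ 2)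
    (hdev : ∀ n, (lam (n+1) * γ (n+1) * β / (2 - lam (n+1) * γ (n+1) * β)) * mnorm M (u (n+1)) ^ 2
        + (lam (n+1) * (2 - lam (n+1) * γ (n+1) * β) / (4 - 2 * lam (n+1) - γ (n+1) * β)) * mnorm M (v (n+1)) ^ 2
        ≤ ζ n * ℓsq n)
    :
    ∀ xs : H, -C xs ∈ A xs →
      ∃ r : ℝ, Tendsto (fun n => mnorm M (x n - xs)) atTop (𝓝 r) := by
  intro xs hxs
  obtain ⟨c, hc, hMc⟩ := hMpos
  have hpos : ∀ w : H, 0 ≤ ⟪w, M w⟫ := fun w => (by positivity : 0 ≤ c * ‖w‖ ^ 2).trans (hMc w)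
  have hl : ∀ n, 0 < lam n := fun n => hε0.trans_le (hlam n).1
  have hg : ∀ n, 0 < γ n := fun n => hε0.trans_le (hγ n).1
  have hD : ∀ n, 0 < 4 - 2 * lam n - γ n * β ∧ 0 < 2 - lam n * γ n * β := fun n =>
    step_denominators_pos (hg n) hβ (by linarith [hlam n])
  have hℓ0 : ∀ n, 0 ≤ ℓsq n := fun n => by
    rw [hℓ n]; exact mul_nonneg (by linarith [mul_pos (hl n) (hD n).1]) (sq_nonneg _)
  let e : ℕ → ℝ := fun n => (lam n * γ n * β / (2 - lam n * γ n * β)) * mnorm M (u n) ^ 2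
    + (lam n * (2 - lam n * γ n * β) / (4 - 2 * lam n - γ n * β)) * mnorm M (v n) ^ 2
  have he : ∀ n, 0 ≤ e n := fun n => by
    have := hl n; have := hg n; have := hD n
    exact add_nonneg (mul_nonneg (div_nonneg (by positivity) (hD n).2.le) (sq_nonneg _))
      (mul_nonneg (div_nonneg (mul_nonneg (hl n).le (hD n).2.le) (hD n).1.le) (sq_nonneg _))
  have hstep : ∀ n, mnorm M (x (n + 1) - xs) ^ 2 + ℓsq n ≤ mnorm M (x n - xs) ^ 2 + e n :=
    fun n => by
      rw [hℓ n, ← add_assoc]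
      exact mnorm_sq_forward_backward_step_le hMsa hpos hMinv₂ hβ hAmono hC hxs (hl n).le
        (hg n).le (hD n).2.ne' (hD n).1.ne' (hy n) (hz n) (hp n) (hx n)
  obtain ⟨r, hr⟩ := exists_tendsto_of_descent_with_deviation hε0
    (fun n => sq_nonneg (mnorm M (x n - xs))) he hℓ0 hstep
    fun n => (hdev n).trans (mul_le_mul_of_nonneg_right (hζ n).2 (hℓ0 n))
  have hsqrt : ∀ w, √(mnorm M w ^ 2) = mnorm M w := fun w => Real.sqrt_sq (Real.sqrt_nonneg _)
  exact ⟨√r, by simpa only [Function.comp_def, hsqrt] using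
    (Real.continuous_sqrt.tendsto r).comp hr⟩

/-- for every zero of A + C, the M-distance sequence converges. -/
theorem distance_sequence_converges
    {H : Type*} [NormedAddCommGroup H] [InnerProductSpace ℝ H] [CompleteSpace H]
    (M : H →L[ℝ] H)
    (hMsa : ∀ a b : H, ⟪M a, b⟫ = ⟪a, M b⟫)
    (hMpos : ∃ c > (0:ℝ), ∀ a : H, ⟪a, M a⟫ ≥ c * ‖a‖ ^ 2)
    (Minv : H →L[ℝ] H)
    (hMinv₁ : ∀ a : H, Minv (M a) = a)
    (hMinv₂ : ∀ a : H, M (Minv a) = a)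
    (β : ℝ) (hβ : 0 < β)
    (A : H → Set H)
    (hAmono : ∀ a b ua vb : H, ua ∈ A a → vb ∈ A b → ⟪ua - vb, a - b⟫ ≥ 0)
    (hAmax : ∀ a ua : H, (∀ b vb : H, vb ∈ A b → ⟪ua - vb, a - b⟫ ≥ 0) → ua ∈ A a)
    (C : H → H)
    (hC : ∀ a b : H, ⟪C a - C b, a - b⟫ ≥ (1 / β) * mnorm Minv (C a - C b) ^ 2)
    (hzer : ∃ w : H, -C w ∈ A w)
    (ε : ℝ) (hε0 : 0 < ε) (hε1 : ε < min 1 (4 / (3 + β)))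
    (ζ γ lam : ℕ → ℝ)
    (hζ : ∀ n, 0 ≤ ζ n ∧ ζ n ≤ 1 - ε)
    (hγ : ∀ n, ε ≤ γ n ∧ γ n ≤ (4 - 3 * ε) / β)
    (hlam : ∀ n, ε ≤ lam n ∧ lam n ≤ 2 - γ n * β / 2 - ε / 2)
    (x u v p y z : ℕ → H) (ℓsq : ℕ → ℝ)
    (hu0 : u 0 = 0) (hv0 : v 0 = 0)
    (hy : ∀ n, y n = x n + u n)
    (hz : ∀ n, z n = x n + (((1 - lam n) * γ n * β) / (2 - lam n * γ n * β)) • u n + v n)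
    (hp : ∀ n, M (z n) - M (p n) - γ n • C (y n) ∈ γ n • A (p n))
    (hx : ∀ n, x (n + 1) = x n + lam n • (p n - z n))
    (hℓ : ∀ n, ℓsq n = (lam n * (4 - 2 * lam n - γ n * β) / 2) *
      mnorm M (p n - x n + ((lam n * γ n * β) / (2 - lam n * γ n * β)) • u n
        - ((2 * (1 - lam n)) / (4 - 2 * lam n - γ n * β)) • v n) ^ 2)
    (hdev : ∀ n, (lam (n+1) * γ (n+1) * β / (2 - lam (n+1) * γ (n+1) * β)) * mnorm M (u (n+1)) ^ 2
        + (lam (n+1) * (2 - lam (n+1) * γ (n+1) * β) / (4 - 2 * lam (n+1) - γ (n+1) * β)) * mnorm M (v (n+1)) ^ 2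
        ≤ ζ n * ℓsq n)
    :
    ∀ xs : H, -C xs ∈ A xs →
      ∃ r : ℝ, Tendsto (fun n => mnorm M (x n - xs)) atTop (𝓝 r) :=
  distance_sequence_converges_general M hMsa hMpos Minv hMinv₂ β hβ A hAmono C hC ε hε0 ζ γ lam hζ
    hγ hlam x u v p y z ℓsq hy hz hp hx hℓ hdev
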